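/- arXiv:1104.3131 — 6 statements merged into one kernel-verified Lean document; each statement's English description precedes it below -/
import Mathlib

section
/- Let a < b be real numbers and let x : [a,b] → ℝⁿ be absolutely continuous. Suppose there exist constants Q, G ≥ 0 such that |ẋ(t)| ≤ Q|x(t)| + G|x(a)| for almost every t ∈ [a,b]. Suppose furthermore that (G+Q)(b−a)·exp(Q(b−a)) < 1. Then for every t ∈ [a,b]: |x(t) − x(a)| ≤ [(G+Q)(b−a)·exp(Q(b−a)) / (1 − (G+Q)(b−a)·exp(Q(b−a)))] · |x(t)|. -/
/-!
Put `u t = ‖x t - x a‖`. Since `‖x s‖ ≤ u s + ‖x a‖`, the hypothesis gives the integral inequality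
`u t ≤ ∫ₐᵗ (Q u + (Q + G) ‖x a‖)`, and Grönwall yields `u t ≤ C ‖x a‖` with
`C = (G + Q)(b - a) exp(Q(b - a))`. Then `‖x a‖ ≤ ‖x t‖ + C ‖x a‖`, i.e.
`‖x a‖ ≤ ‖x t‖ / (1 - C)` because `C < 1`.
-/

open MeasureTheory Set

theorem Real.exp_sub_one_le_mul_exp (s : ℝ) : Real.exp s - 1 ≤ s * Real.exp s := by
  have h := Real.add_one_le_exp (-s)
  have h' : Real.exp (-s) * Real.exp s = 1 := by rw [← Real.exp_add, neg_add_cancel, Real.exp_zero]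
  nlinarith [Real.exp_pos s]

theorem gronwallBound_zero_le_mul_exp {K ε x : ℝ} (hK : 0 ≤ K) (hε : 0 ≤ ε) :
    gronwallBound 0 K ε x ≤ ε * x * Real.exp (K * x) := by
  rcases hK.eq_or_lt with rfl | hK
  · simp [gronwallBound_K0]
  · simp only [gronwallBound_of_K_ne_0 hK.ne', zero_mul, zero_add]
    rw [div_mul_eq_mul_div, div_le_iff₀ hK]
    have := mul_le_mul_of_nonneg_left (Real.exp_sub_one_le_mul_exp (K * x)) hε
    linarith

theorem le_gronwallBound_of_le_integral {u : ℝ → ℝ} {a b K ε : ℝ} (hab : a ≤ b)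
    (hu : ContinuousOn u (Icc a b)) (hK : 0 ≤ K)
    (h : ∀ t ∈ Icc a b, u t ≤ ∫ s in a..t, (K * u s + ε)) :
    ∀ t ∈ Icc a b, u t ≤ gronwallBound 0 K ε (t - a) := by
  -- a continuous extension of `u`, so that its primitive is differentiable everywhere
  set v := IccExtend hab (domRestrict (Icc a b) u)
  have hv : Continuous v := (continuousOn_iff_continuous_domRestrict.1 hu).Icc_extend'
  have hvu : EqOn v u (Icc a b) := fun t ht => IccExtend_of_mem hab _ ht
  set ψ := fun t => ∫ s in a..t, (K * v s + ε)
  have hψ : ∀ t, HasDerivAt ψ (K * v t + ε) t := fun t =>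
    (((hv.const_mul K).add continuous_const).integral_hasStrictDerivAt a t).hasDerivAt
  have huψ : ∀ t ∈ Icc a b, u t ≤ ψ t := by
    intro t ht
    refine (h t ht).trans_eq (intervalIntegral.integral_congr fun s hs => ?_)
    rw [uIcc_of_le ht.1] at hs
    simp only [hvu (Icc_subset_Icc_right ht.2 hs)]
  have hψ_le : ∀ t ∈ Icc a b, ψ t ≤ gronwallBound 0 K ε (t - a) := by
    refine le_gronwallBound_of_liminf_deriv_right_le
      (fun t _ => (hψ t).continuousAt.continuousWithinAt)
      (fun t _ _ hr => (hψ t).hasDerivWithinAt.liminf_right_slope_le hr) (by simp [ψ]) ?_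
    intro t ht
    rw [hvu (Ico_subset_Icc_self ht)]
    gcongr
    exact huψ t (Ico_subset_Icc_self ht)
  exact fun t ht => (huψ t ht).trans (hψ_le t ht)

theorem norm_sub_le_div_one_sub_mul_norm {E : Type*} [SeminormedAddCommGroup E] {v w : E}
    {C : ℝ} (hC₀ : 0 ≤ C) (hC₁ : C < 1) (h : ‖v - w‖ ≤ C * ‖w‖) :
    ‖v - w‖ ≤ C / (1 - C) * ‖v‖ := by
  have hw : ‖w‖ ≤ ‖v‖ / (1 - C) := by
    rw [le_div_iff₀ (sub_pos.2 hC₁)]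
    nlinarith [norm_le_norm_add_norm_sub' w v, norm_sub_rev v w]
  calc ‖v - w‖ ≤ C * ‖w‖ := h
    _ ≤ C * (‖v‖ / (1 - C)) := by gcongr
    _ = C / (1 - C) * ‖v‖ := by ring

section AbsolutelyContinuous

variable {E : Type*} [NormedAddCommGroup E] [NormedSpace ℝ E] {x x' : ℝ → E} {a b : ℝ}

theorem continuousOn_of_eq_add_integral (hab : a ≤ b) (hint : IntervalIntegrable x' volume a b)
    (hAC : ∀ t ∈ Icc a b, x t = x a + ∫ s in a..t, x' s) : ContinuousOn x (Icc a b) := by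
  have h := intervalIntegral.continuousOn_primitive_interval' hint left_mem_uIcc
  rw [uIcc_of_le hab] at h
  exact (continuousOn_const.add h).congr hAC

theorem norm_sub_le_integral_of_norm_deriv_le {Q G : ℝ} (hQ : 0 ≤ Q)
    (hint : IntervalIntegrable x' volume a b)
    (hAC : ∀ t ∈ Icc a b, x t = x a + ∫ s in a..t, x' s)
    (hbound : ∀ᵐ t ∂(volume.restrict (Icc a b)), ‖x' t‖ ≤ Q * ‖x t‖ + G * ‖x a‖) :
    ∀ t ∈ Icc a b, ‖x t - x a‖ ≤ ∫ s in a..t, (Q * ‖x s - x a‖ + (Q + G) * ‖x a‖) := by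
  intro t ht
  have hsub : Icc a t ⊆ Icc a b := Icc_subset_Icc_right ht.2
  have hsub' : uIcc a t ⊆ uIcc a b := by
    rw [uIcc_of_le ht.1, uIcc_of_le (ht.1.trans ht.2)]
    exact hsub
  have hcont : ContinuousOn (fun s => Q * ‖x s - x a‖ + (Q + G) * ‖x a‖) (uIcc a t) := by
    have hx := continuousOn_of_eq_add_integral (ht.1.trans ht.2) hint hAC
    rw [uIcc_of_le ht.1]
    exact ((((hx.mono hsub).sub continuousOn_const).norm).const_smul Q).add continuousOn_const
  calc ‖x t - x a‖ = ‖∫ s in a..t, x' s‖ := by rw [hAC t ht, add_sub_cancel_left]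
    _ ≤ ∫ s in a..t, ‖x' s‖ := intervalIntegral.norm_integral_le_integral_norm ht.1
    _ ≤ _ := by
      refine intervalIntegral.integral_mono_ae_restrict ht.1 (hint.mono_set hsub').norm
        hcont.intervalIntegrable ?_
      filter_upwards [ae_restrict_of_ae_restrict_of_subset hsub hbound] with s hs
      calc ‖x' s‖ ≤ Q * ‖x s‖ + G * ‖x a‖ := hs
        _ ≤ Q * (‖x s - x a‖ + ‖x a‖) + G * ‖x a‖ := by
          gcongr
          exact norm_le_norm_sub_add (x s) (x a)
        _ = Q * ‖x s - x a‖ + (Q + G) * ‖x a‖ := by ring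

theorem norm_sub_le_mul_norm_of_norm_deriv_le {Q G : ℝ} (hQ : 0 ≤ Q) (hG : 0 ≤ G)
    (hint : IntervalIntegrable x' volume a b)
    (hAC : ∀ t ∈ Icc a b, x t = x a + ∫ s in a..t, x' s)
    (hbound : ∀ᵐ t ∂(volume.restrict (Icc a b)), ‖x' t‖ ≤ Q * ‖x t‖ + G * ‖x a‖) :
    ∀ t ∈ Icc a b, ‖x t - x a‖ ≤ (G + Q) * (b - a) * Real.exp (Q * (b - a)) * ‖x a‖ := by
  intro t ht
  have hab : a ≤ b := ht.1.trans ht.2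
  have hε : 0 ≤ (Q + G) * ‖x a‖ := by positivity
  have hu : ContinuousOn (fun s => ‖x s - x a‖) (Icc a b) :=
    ((continuousOn_of_eq_add_integral hab hint hAC).sub continuousOn_const).norm
  calc ‖x t - x a‖ ≤ gronwallBound 0 Q ((Q + G) * ‖x a‖) (t - a) :=
        le_gronwallBound_of_le_integral hab hu hQ
          (norm_sub_le_integral_of_norm_deriv_le hQ hint hAC hbound) t ht
    _ ≤ gronwallBound 0 Q ((Q + G) * ‖x a‖) (b - a) :=
        gronwallBound_mono le_rfl hε hQ (by linarith [ht.2])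
    _ ≤ (Q + G) * ‖x a‖ * (b - a) * Real.exp (Q * (b - a)) :=
        gronwallBound_zero_le_mul_exp hQ hε
    _ = (G + Q) * (b - a) * Real.exp (Q * (b - a)) * ‖x a‖ := by ring

end AbsolutelyContinuous

theorem lemma_2_3_general (n : ℕ) (a b : ℝ)
    (x x' : ℝ → EuclideanSpace ℝ (Fin n))
    (hint : IntervalIntegrable x' volume a b)
    (hAC : ∀ t ∈ Icc a b, x t = x a + ∫ s in a..t, x' s)
    (Q G : ℝ) (hQ : 0 ≤ Q) (hG : 0 ≤ G)
    (hbound : ∀ᵐ t ∂(volume.restrict (Icc a b)), ‖x' t‖ ≤ Q * ‖x t‖ + G * ‖x a‖)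
    (hsmall : (G + Q) * (b - a) * Real.exp (Q * (b - a)) < 1) :
    ∀ t ∈ Icc a b,
      ‖x t - x a‖ ≤ (G + Q) * (b - a) * Real.exp (Q * (b - a)) /
        (1 - (G + Q) * (b - a) * Real.exp (Q * (b - a))) * ‖x t‖ := by
  intro t ht
  have hba : 0 ≤ b - a := sub_nonneg.2 (ht.1.trans ht.2)
  exact norm_sub_le_div_one_sub_mul_norm (by positivity) hsmall
    (norm_sub_le_mul_norm_of_norm_deriv_le hQ hG hint hAC hbound t ht)

/-- **Lemma 2.3.** Let `a < b` and let `x : [a,b] → ℝⁿ` be absolutely continuous (i.e.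
differentiable a.e. with locally integrable derivative `x'` and
`x t = x a + ∫_a^t x' s ds` on `[a,b]`).  If `‖x' t‖ ≤ Q ‖x t‖ + G ‖x a‖` a.e. on `[a,b]`
with `Q, G ≥ 0` and `(G+Q)(b-a) exp(Q(b-a)) < 1`, then for all `t ∈ [a,b]`,
`‖x t - x a‖ ≤ (G+Q)(b-a) exp(Q(b-a)) / (1 - (G+Q)(b-a) exp(Q(b-a))) * ‖x t‖`. -/
theorem lemma_2_3 (n : ℕ) (a b : ℝ) (hab : a < b)
    (x x' : ℝ → EuclideanSpace ℝ (Fin n))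
    (hderiv : ∀ᵐ t ∂(volume.restrict (Icc a b)), HasDerivAt x (x' t) t)
    (hint : IntervalIntegrable x' volume a b)
    (hAC : ∀ t ∈ Icc a b, x t = x a + ∫ s in a..t, x' s)
    (Q G : ℝ) (hQ : 0 ≤ Q) (hG : 0 ≤ G)
    (hbound : ∀ᵐ t ∂(volume.restrict (Icc a b)), ‖x' t‖ ≤ Q * ‖x t‖ + G * ‖x a‖)
    (hsmall : (G + Q) * (b - a) * Real.exp (Q * (b - a)) < 1) :
    ∀ t ∈ Icc a b,
      ‖x t - x a‖ ≤ (G + Q) * (b - a) * Real.exp (Q * (b - a)) /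
        (1 - (G + Q) * (b - a) * Real.exp (Q * (b - a))) * ‖x t‖ :=
  lemma_2_3_general n a b x x' hint hAC Q G hQ hG hbound hsmall
end

section
/- Let n ≥ 1, let A ∈ ℝ^{n×n} be the matrix with entries A_{i,j} = 1 if j = i−1 and A_{i,j} = 0 otherwise, let b = (1,0,…,0)' ∈ ℝⁿ, and let p ∈ ℝⁿ be such that the matrix A' + pb' is invertible. Define c = −(A' + pb')^{−1}(0,…,0,1)'. Then c'b ≠ 0, and for every x = (x₁,…,xₙ)' ∈ ℝⁿ one has xₙ + c'Ax = −(c'b)·(p'x). -/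
open Matrix

noncomputable section

/-- The `(n+1) × (n+1)` matrix with ones on the subdiagonal and zeros elsewhere. -/
def matA (n : ℕ) : Matrix (Fin (n+1)) (Fin (n+1)) ℝ :=
  Matrix.of fun i j => if (i : ℕ) = (j : ℕ) + 1 then 1 else 0

/-- The vector `b = (1,0,…,0)'`. -/
def vecb (n : ℕ) : Fin (n+1) → ℝ := fun i => if (i : ℕ) = 0 then 1 else 0

/-- If `A' + pb'` is invertible and `c = -(A' + pb')⁻¹ (0,…,0,1)'`, then `c'b ≠ 0` and
`xₙ + c'Ax = -(c'b)(p'x)` for every `x ∈ ℝⁿ`. -/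
theorem forwarding_c_identity (n : ℕ) (p : Fin (n+1) → ℝ)
    (hinv : IsUnit ((matA n)ᵀ + vecMulVec p (vecb n)))
    (c : Fin (n+1) → ℝ)
    (hc : c = -(((matA n)ᵀ + vecMulVec p (vecb n))⁻¹.mulVec (Pi.single (Fin.last n) 1))) :
    c ⬝ᵥ vecb n ≠ 0 ∧
      ∀ x : Fin (n+1) → ℝ,
        x (Fin.last n) + c ⬝ᵥ (matA n).mulVec x = -(c ⬝ᵥ vecb n) * (p ⬝ᵥ x) := by
  set M := (matA n)ᵀ + vecMulVec p (vecb n) with hMdef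
  have hdet : IsUnit M.det := (Matrix.isUnit_iff_isUnit_det M).mp hinv
  have hMc : M.mulVec c = -(Pi.single (Fin.last n) 1) := by
    rw [hc, Matrix.mulVec_neg, Matrix.mulVec_mulVec, Matrix.mul_nonsing_inv _ hdet,
      Matrix.one_mulVec]
  have hcb : c ⬝ᵥ vecb n = vecb n ⬝ᵥ c := dotProduct_comm _ _
  have hvmv : (vecMulVec p (vecb n)).mulVec c = (vecb n ⬝ᵥ c) • p := by
    funext i
    simp [Matrix.mulVec, Matrix.vecMulVec_apply, dotProduct, Finset.mul_sum, mul_comm,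
      mul_left_comm]
  have hsum : M.mulVec c = (matA n)ᵀ.mulVec c + (vecb n ⬝ᵥ c) • p := by
    rw [hMdef, Matrix.add_mulVec, hvmv]
  have hsplit : (matA n)ᵀ.mulVec c = -(Pi.single (Fin.last n) 1) - (vecb n ⬝ᵥ c) • p := by
    rw [← hMc, hsum]; abel
  -- the last row of Aᵀ is zero
  have hlast : (matA n)ᵀ.mulVec c (Fin.last n) = 0 := by
    simp only [Matrix.mulVec, dotProduct, Matrix.transpose_apply, matA, Matrix.of_apply]
    refine Finset.sum_eq_zero fun j _ => ?_
    have hj : (j : ℕ) ≠ n + 1 := by omega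
    rw [Fin.val_last, if_neg hj, zero_mul]
  have hne : c ⬝ᵥ vecb n ≠ 0 := by
    intro h0
    have h0' : vecb n ⬝ᵥ c = 0 := by rw [← hcb]; exact h0
    have := congrFun hsum (Fin.last n)
    rw [hMc] at this
    simp [hlast, h0', Pi.single_apply] at this
  refine ⟨hne, fun x => ?_⟩
  have key : c ⬝ᵥ (matA n).mulVec x = ((matA n)ᵀ.mulVec c) ⬝ᵥ x := by
    rw [Matrix.dotProduct_mulVec, Matrix.mulVec_transpose]
  rw [key, hsplit, sub_dotProduct, neg_dotProduct, smul_dotProduct,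
    single_dotProduct, hcb, smul_eq_mul]
  ring
end
end

section
/- (Example 4.1, first forwarding step) Let R, K > 0 satisfy R²/(1−R) < K < R and R + K < 1, and set M = K/(R+K). Then there exists δ > 0 such that: (i) x·u < 0 for all x, u ∈ ℝ with x² = R² and |u + x| ≤ K; (ii) |x·u| < K for all x, u ∈ ℝ with x² ≤ R² and |u + x| ≤ K; (iii) z(M·x·u − K·x) ≤ (MK − δ)z² + (1 − δ)x² for all x, z ∈ ℝ with x² ≤ R², |z| ≤ 1 and u = −x − Kz. -/
private lemma aux_neg_le {R x : ℝ} (hR : 0 < R) (hx : x ^ 2 ≤ R ^ 2) : -R ≤ x := by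
  nlinarith [sq_nonneg (x + R)]

private lemma aux_quad_nonneg {a c d k x z : ℝ} (had : d < a)
    (hkey : (a - d) * (c - d) = d ^ 2 + k ^ 2 / 4) :
    0 ≤ (a - d) * z ^ 2 + k * (x * z) + (c - d) * x ^ 2 := by
  have hexp : 4 * (a - d) * ((a - d) * z ^ 2 + k * (x * z) + (c - d) * x ^ 2)
      = (2 * (a - d) * z + k * x) ^ 2 + 4 * d ^ 2 * x ^ 2 := by
    linear_combination (4 * x ^ 2) * hkey
  nlinarith [sq_nonneg (2 * (a - d) * z + k * x), sq_nonneg (d * x), hexp]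


set_option maxHeartbeats 1600000 in
/-- **Example 4.1, first forwarding step.** If `R²/(1-R) < K < R` and `R + K < 1`, and
`M = K/(R+K)`, then there exists `δ > 0` such that conditions (3.3), (3.4), (3.5) hold for
the scalar subsystem (`n = 1`, `A = 0`, `b = 1`, `P = 1`, `p = -1`, `c = 1`, `ω = 1`,
`f ≡ 0`, `g(x,u) = x·u`). -/
theorem example_4_1_first_step (R K M : ℝ) (hR : 0 < R) (hK : 0 < K)
    (h1 : R ^ 2 / (1 - R) < K) (h2 : K < R) (h3 : R + K < 1) (hM : M = K / (R + K)) :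
    ∃ δ : ℝ, 0 < δ ∧
      (∀ x u : ℝ, x ^ 2 = R ^ 2 → |u + x| ≤ K → x * u < 0) ∧
      (∀ x u : ℝ, x ^ 2 ≤ R ^ 2 → |u + x| ≤ K → |x * u| < K) ∧
      (∀ x z u : ℝ, x ^ 2 ≤ R ^ 2 → |z| ≤ 1 → u = -x - K * z →
        z * (M * (x * u) - K * x) ≤ (M * K - δ) * z ^ 2 + (1 - δ) * x ^ 2) := by
  have hR1 : R < 1 := by linarith
  have h1R : 0 < 1 - R := by linarith
  have h1' : R ^ 2 < K * (1 - R) := by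
    have := (div_lt_iff₀ h1R).mp h1
    linarith
  -- condition (3.3)
  have cond1 : ∀ x u : ℝ, x ^ 2 = R ^ 2 → |u + x| ≤ K → x * u < 0 := by
    intro x u hx hu
    have hb := abs_le.mp hu
    have hcase : (x - R) * (x + R) = 0 := by linear_combination hx
    rcases mul_eq_zero.mp hcase with h | h
    · have hxR : x = R := by linarith
      subst hxR; nlinarith [hb.1, hb.2]
    · have hxR : x = -R := by linarith
      subst hxR; nlinarith [hb.1, hb.2]
  -- condition (3.4)
  have cond2 : ∀ x u : ℝ, x ^ 2 ≤ R ^ 2 → |u + x| ≤ K → |x * u| < K := by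
    intro x u hx hu
    have hxR : |x| ≤ R := by
      rw [abs_le]; constructor
      · nlinarith [sq_nonneg (x + R)]
      · nlinarith [sq_nonneg (x - R)]
    have habs : |x * (u + x)| ≤ R * K := by
      rw [abs_mul]
      exact mul_le_mul hxR hu (abs_nonneg _) hR.le
    have h4 := abs_le.mp habs
    have hx0 : 0 ≤ x ^ 2 := sq_nonneg x
    rw [abs_lt]
    constructor <;> nlinarith [h4.1, h4.2]
  -- setup for condition (3.5)
  have hRK : 0 < R + K := by linarith
  have hMK : M * (R + K) = K := by rw [hM]; field_simp
  have hM0 : 0 < M := by rw [hM]; positivity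
  have hM1 : M < 1 := by nlinarith [hMK]
  have hM2 : (1 - M) * (R + K) = R := by nlinarith [hMK]
  have hhalf : R < 1 - R := by nlinarith
  have hquad : (R + K) ^ 2 < 4 * R * (1 - R) := by nlinarith
  obtain ⟨a0, ha0⟩ : ∃ a : ℝ, a = M * K * (1 - R) := ⟨_, rfl⟩
  obtain ⟨c0, hc0⟩ : ∃ c : ℝ, c = 1 - M := ⟨_, rfl⟩
  have ha0pos : 0 < a0 := by rw [ha0]; positivity
  have hc0pos : 0 < c0 := by rw [hc0]; linarith
  have hD : K ^ 2 < 4 * a0 * c0 := by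
    rw [ha0, hc0]
    nlinarith [hMK, hM2, hquad, mul_pos hRK hRK]
  obtain ⟨δ, hδ⟩ : ∃ d : ℝ, d = (4 * a0 * c0 - K ^ 2) / (4 * (a0 + c0)) := ⟨_, rfl⟩
  have hsum : 0 < 4 * (a0 + c0) := by linarith
  have hδpos : 0 < δ := by
    rw [hδ]; apply div_pos <;> linarith
  have hδeq : δ * (4 * (a0 + c0)) = 4 * a0 * c0 - K ^ 2 := by
    rw [hδ]; field_simp
  have hδa : δ < a0 := by
    have h : a0 - δ = (4 * a0 ^ 2 + K ^ 2) / (4 * (a0 + c0)) := by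
      rw [hδ]; field_simp; ring
    have h2' : 0 < (4 * a0 ^ 2 + K ^ 2) / (4 * (a0 + c0)) := by positivity
    linarith
  have hkey : (a0 - δ) * (c0 - δ) = δ ^ 2 + K ^ 2 / 4 := by
    linear_combination (-(1:ℝ)/4) * hδeq
  refine ⟨δ, hδpos, cond1, cond2, ?_⟩
  intro x z u hx hz hu
  subst hu
  have hz' := abs_le.mp hz
  have hxR : -R ≤ x := aux_neg_le hR hx
  have hQ : 0 ≤ (a0 - δ) * z ^ 2 + K * (x * z) + (c0 - δ) * x ^ 2 :=
    aux_quad_nonneg hδa hkey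
  have h5 : a0 * z ^ 2 ≤ M * K * z ^ 2 * (1 + x) := by
    have hnn : (0:ℝ) ≤ M * K * z ^ 2 := by positivity
    have := mul_le_mul_of_nonneg_left (show 1 - R ≤ 1 + x by linarith) hnn
    calc a0 * z ^ 2 = M * K * z ^ 2 * (1 - R) := by rw [ha0]; ring
      _ ≤ _ := this
  have h6 : c0 * x ^ 2 ≤ x ^ 2 * (1 + M * z) := by
    have hMz : 1 - M ≤ 1 + M * z := by nlinarith [mul_le_mul_of_nonneg_left hz'.1 hM0.le]
    have := mul_le_mul_of_nonneg_left hMz (sq_nonneg x)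
    calc c0 * x ^ 2 = x ^ 2 * (1 - M) := by rw [hc0]; ring
      _ ≤ _ := this
  linarith [hQ, h5, h6,
    (by ring : z * (M * (x * (-x - K * z)) - K * x)
      = -(M * (x ^ 2 * z)) - M * K * (z ^ 2 * x) - K * (x * z))]
end

section
/- (Example 4.1, second forwarding step) Let A = [[0,0],[1,0]] ∈ ℝ^{2×2}, b = (1,0)', P = [[1,1],[1,2]], p = (−2,−2)', c = (1/2,1)' (so that c'b = 1/2), f(x,u) = (0, x₁u)' and g(x,u) = x₁². Let R, K > 0 satisfy 4R²/(1 − 2√2·R) < K < 2R(1 − 2(2+√2)R)/(R+1) and (4+2√2)R + (3−2√2)R² < 1, and set M = K(2 + (3+2√2)R)/(4R) and ω = 1. Then there exists δ > 0 such that: (i) x'P(Ax + f(x,u) + bu) < 0 for all x ∈ ℝ² and u ∈ ℝ with x'Px = R² and |u − p'x| ≤ K/2; (ii) |g(x,u) + c'f(x,u)| < K/4 for all x'Px ≤ R², |u − p'x| ≤ K/2; (iii) z(Mg(x,u) + Mc'f(x,u) − (K/2)b'Px) ≤ (MK/4 − δ)z² − x'P((A + bp' + δI)x + f(x,u)) for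 all (x,z) ∈ ℝ²×ℝ with x'Px ≤ R², |z| ≤ 1 and u = p'x − (K/2)z. -/
open Matrix

noncomputable section

set_option maxHeartbeats 2000000

private lemma aux33 (R K s q0 q1 u : ℝ) (hR : 0 < R) (hs0 : 0 < s)
    (h2' : K*(R+1) < 2*R*(1 - 2*(2+s)*R))
    (hx : q0*(q0+q1) + q1*(q0+2*q1) = R^2)
    (he1 : -(K/2) ≤ u + 2*q0 + 2*q1) (he2 : u + 2*q0 + 2*q1 ≤ K/2) :
    q0*(u + (q0 + q0*u)) + q1*(u + (2*q0 + 2*q0*u)) < 0 := by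
  have hxs : (q0+q1)^2 + q1^2 = R^2 := by linear_combination hx
  have ha2 : (q0+q1)^2 ≤ R^2 := by nlinarith [sq_nonneg q1]
  have haR1 : q0+q1 ≤ R := by nlinarith
  have haR2 : -R ≤ q0+q1 := by nlinarith
  have hm1 : 2*(q0+q1)^2 - R^2 ≤ R^2 := by linarith
  have hm2 : -(R^2) ≤ 2*(q0+q1)^2 - R^2 := by nlinarith [sq_nonneg (q0+q1)]
  have t1 : (u+2*q0+2*q1) * ((q0+q1) + (2*(q0+q1)^2 - R^2)) ≤ K/2*(R+R^2) := by
    nlinarith [mul_nonneg (by linarith : (0:ℝ) ≤ K/2 - (u+2*q0+2*q1))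
        (by linarith : (0:ℝ) ≤ (R+R^2) + ((q0+q1) + (2*(q0+q1)^2 - R^2))),
      mul_nonneg (by linarith : (0:ℝ) ≤ K/2 + (u+2*q0+2*q1))
        (by linarith : (0:ℝ) ≤ (R+R^2) - ((q0+q1) + (2*(q0+q1)^2 - R^2)))]
  have t2 : 2*(q0+q1)*(R^2 - 2*(q0+q1)^2) ≤ 2*R*R^2 := by
    nlinarith [mul_nonneg (by linarith : (0:ℝ) ≤ R - (q0+q1))
        (by linarith : (0:ℝ) ≤ R^2 + (R^2 - 2*(q0+q1)^2)),
      mul_nonneg (by linarith : (0:ℝ) ≤ R + (q0+q1))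
        (by linarith : (0:ℝ) ≤ R^2 - (R^2 - 2*(q0+q1)^2))]
  have t3 : K/2*(R+R^2) + 2*R*R^2 - R^2 < 0 := by
    nlinarith [mul_lt_mul_of_pos_left h2' (show (0:ℝ) < R/2 by linarith),
      mul_pos (mul_pos hR hR) hR, mul_pos hs0 (mul_pos (mul_pos hR hR) hR)]
  have hxu : (1+u) * ((q0+q1)^2 + q1^2 - R^2) = 0 := by rw [hxs]; ring
  linarith [t1, t2, t3, hxu]

private lemma aux34 (R K s q0 q1 u : ℝ) (hR : 0 < R) (hs0 : 0 < s) (hs2 : s^2 = 2)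
    (h1' : 4*R^2 < K*(1 - 2*s*R))
    (hx : q0*(q0+q1) + q1*(q0+2*q1) ≤ R^2)
    (he1 : -(K/2) ≤ u + 2*q0 + 2*q1) (he2 : u + 2*q0 + 2*q1 ≤ K/2) :
    -(K/4) < q0^2 + q0*u ∧ q0^2 + q0*u < K/4 := by
  have hxs : (q0+q1)^2 + q1^2 ≤ R^2 := by nlinarith
  have hq0sq : q0^2 ≤ 2*R^2 := by nlinarith [sq_nonneg (q0+2*q1)]
  have hsR0 : 0 < s*R := mul_pos hs0 hR
  have hq0a : q0 ≤ s*R := by nlinarith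
  have hq0b : -(s*R) ≤ q0 := by nlinarith
  have hD1 : q0^2 + 2*q0*q1 ≤ R^2 := by nlinarith [sq_nonneg q1]
  have hD2 : -(R^2) ≤ q0^2 + 2*q0*q1 := by nlinarith [sq_nonneg (q0+q1)]
  have p1 := mul_nonneg (by linarith : (0:ℝ) ≤ s*R - q0)
    (by linarith : (0:ℝ) ≤ K/2 - (u+2*q0+2*q1))
  have p2 := mul_nonneg (by linarith : (0:ℝ) ≤ s*R + q0)
    (by linarith : (0:ℝ) ≤ K/2 + (u+2*q0+2*q1))
  have p3 := mul_nonneg (by linarith : (0:ℝ) ≤ s*R - q0)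
    (by linarith : (0:ℝ) ≤ K/2 + (u+2*q0+2*q1))
  have p4 := mul_nonneg (by linarith : (0:ℝ) ≤ s*R + q0)
    (by linarith : (0:ℝ) ≤ K/2 - (u+2*q0+2*q1))
  constructor <;> nlinarith [p1, p2, p3, p4, hD1, hD2, h1']

private lemma aux35 (R K M s δ q0 q1 z : ℝ) (hR : 0 < R) (hK : 0 < K)
    (hs0 : 0 < s) (hs2 : s^2 = 2) (hM0 : 0 < M)
    (hδA : δ < 1 - 2*R)
    (hdisc2 : ((M+K/2)*R+K/2)^2 ≤ 4*((1-2*R) - δ)*((M*K*(1-2*s*R)/4) - δ))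
    (hx : q0*(q0+q1) + q1*(q0+2*q1) ≤ R^2) :
    z * (M*q0^2 + M*(q0*(-2*q0-2*q1 - K/2*z)) - K/2*(q0+q1))
      ≤ (M*K/4 - δ)*z^2
        - (q0*((-2+δ)*q0 + -(2*q1) + (q0 + δ*q1 + q0*(-2*q0-2*q1 - K/2*z)))
           + q1*((-2+δ)*q0 + -(2*q1) + 2*(q0 + δ*q1 + q0*(-2*q0-2*q1 - K/2*z)))) := by
  set w := |z| with hwdef
  have hw0 : 0 ≤ w := abs_nonneg z
  have hwz : z ≤ w := le_abs_self z
  have hwz' : -w ≤ z := neg_abs_le z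
  have hzw : z^2 = w^2 := (sq_abs z).symm
  have hS0 : (0:ℝ) ≤ (q0+q1)^2 + q1^2 := by positivity
  set ρ := Real.sqrt ((q0+q1)^2 + q1^2) with hρdef
  have hρ0 : 0 ≤ ρ := Real.sqrt_nonneg _
  have hρ2 : ρ^2 = (q0+q1)^2 + q1^2 := Real.sq_sqrt hS0
  have hρR : ρ ≤ R := by nlinarith [hρ2, hρ0]
  have ha1 : q0+q1 ≤ ρ := by nlinarith [sq_nonneg q1]
  have ha2 : -ρ ≤ q0+q1 := by nlinarith [sq_nonneg q1]
  have hDa : q0^2+2*q0*q1 ≤ ρ^2 := by nlinarith [sq_nonneg q1]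
  have hDb : -(ρ^2) ≤ q0^2+2*q0*q1 := by nlinarith [sq_nonneg (q0+q1)]
  have b1 : -((q0+q1)*(q0^2+2*q0*q1)) ≤ R*ρ^2 := by
    nlinarith [mul_nonneg (by linarith : (0:ℝ) ≤ R - (q0+q1))
        (by linarith : (0:ℝ) ≤ ρ^2 - (q0^2+2*q0*q1)),
      mul_nonneg (by linarith : (0:ℝ) ≤ R + (q0+q1))
        (by linarith : (0:ℝ) ≤ ρ^2 + (q0^2+2*q0*q1))]
  have b2 : -(z*(q0^2+2*q0*q1)) ≤ R*(ρ*w) := by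
    nlinarith [mul_nonneg (by linarith : (0:ℝ) ≤ w - z)
        (by linarith : (0:ℝ) ≤ ρ^2 - (q0^2+2*q0*q1)),
      mul_nonneg (by linarith : (0:ℝ) ≤ w + z)
        (by linarith : (0:ℝ) ≤ ρ^2 + (q0^2+2*q0*q1)),
      mul_nonneg (mul_nonneg hw0 hρ0) (by linarith : (0:ℝ) ≤ R - ρ)]
  have b3 : -((q0+q1)*z) ≤ ρ*w := by
    nlinarith [mul_nonneg (by linarith : (0:ℝ) ≤ ρ - (q0+q1))
        (by linarith : (0:ℝ) ≤ w + z),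
      mul_nonneg (by linarith : (0:ℝ) ≤ ρ + (q0+q1))
        (by linarith : (0:ℝ) ≤ w - z)]
  have hx1b : -(s*ρ) ≤ q0 := by nlinarith [sq_nonneg (q0+2*q1), mul_nonneg hs0.le hρ0]
  have hq0R : -q0 ≤ s*R := by
    have := mul_le_mul_of_nonneg_left hρR hs0.le
    linarith
  have b4 : -q0*z^2 ≤ (s*R)*z^2 := mul_le_mul_of_nonneg_right hq0R (sq_nonneg z)
  have sb2 := mul_le_mul_of_nonneg_left b2 (by linarith : (0:ℝ) ≤ M + K/2)
  have sb3 := mul_le_mul_of_nonneg_left b3 (by linarith : (0:ℝ) ≤ K/2)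
  have sb4 := mul_le_mul_of_nonneg_left b4 (by positivity : (0:ℝ) ≤ M*K/2)
  have hδA' : 0 < (1-2*R) - δ := by linarith
  have kq0 : ((M+K/2)*R+K/2)*(ρ*w) ≤ ((1-2*R)-δ)*ρ^2 + ((M*K*(1-2*s*R)/4)-δ)*w^2 := by
    nlinarith only [sq_nonneg (2*((1-2*R)-δ)*ρ - ((M+K/2)*R+K/2)*w),
      mul_nonneg (sub_nonneg.mpr hdisc2) (sq_nonneg w), hδA']
  rw [hρ2] at b1 kq0
  rw [← hzw] at kq0
  linarith [b1, sb2, sb3, sb4, kq0]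

/-- **Example 4.1, second forwarding step.** With `A = [[0,0],[1,0]]`, `b = (1,0)'`,
`P = [[1,1],[1,2]]`, `p = (-2,-2)'`, `c = (1/2,1)'` (so `c'b = 1/2`), `f(x,u) = (0, x₁u)'`,
`g(x,u) = x₁²`, if `4R²/(1-2√2 R) < K < 2R(1-2(2+√2)R)/(R+1)` and
`(4+2√2)R + (3-2√2)R² < 1`, and `M = K(2+(3+2√2)R)/(4R)`, `ω = 1`, then there exists
`δ > 0` such that conditions (3.3), (3.4), (3.5) hold. -/
theorem example_4_1_second_step (R K M : ℝ) (hR : 0 < R) (hK : 0 < K)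
    (h1 : 4 * R ^ 2 / (1 - 2 * Real.sqrt 2 * R) < K)
    (h2 : K < 2 * R * (1 - 2 * (2 + Real.sqrt 2) * R) / (R + 1))
    (h3 : (4 + 2 * Real.sqrt 2) * R + (3 - 2 * Real.sqrt 2) * R ^ 2 < 1)
    (hM : M = K * (2 + (3 + 2 * Real.sqrt 2) * R) / (4 * R)) :
    let A : Matrix (Fin 2) (Fin 2) ℝ := !![0, 0; 1, 0]
    let b : Fin 2 → ℝ := ![1, 0]
    let P : Matrix (Fin 2) (Fin 2) ℝ := !![1, 1; 1, 2]
    let p : Fin 2 → ℝ := ![-2, -2]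
    let c : Fin 2 → ℝ := ![1/2, 1]
    let f : (Fin 2 → ℝ) → ℝ → (Fin 2 → ℝ) := fun x u => ![0, x 0 * u]
    let g : (Fin 2 → ℝ) → ℝ → ℝ := fun x _u => (x 0) ^ 2
    ∃ δ : ℝ, 0 < δ ∧
      -- (3.3)
      (∀ (x : Fin 2 → ℝ) (u : ℝ), x ⬝ᵥ P.mulVec x = R ^ 2 → |u - p ⬝ᵥ x| ≤ K / 2 →
        x ⬝ᵥ P.mulVec (A.mulVec x + f x u + u • b) < 0) ∧
      -- (3.4)
      (∀ (x : Fin 2 → ℝ) (u : ℝ), x ⬝ᵥ P.mulVec x ≤ R ^ 2 → |u - p ⬝ᵥ x| ≤ K / 2 →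
        |g x u + c ⬝ᵥ f x u| < K / 4) ∧
      -- (3.5)
      (∀ (x : Fin 2 → ℝ) (z u : ℝ), x ⬝ᵥ P.mulVec x ≤ R ^ 2 → |z| ≤ 1 →
        u = p ⬝ᵥ x - K / 2 * z →
        z * (M * g x u + M * (c ⬝ᵥ f x u) - K / 2 * (b ⬝ᵥ P.mulVec x))
          ≤ (M * K / 4 - δ) * z ^ 2
            - x ⬝ᵥ P.mulVec ((A + vecMulVec b p + δ • (1 : Matrix (Fin 2) (Fin 2) ℝ)).mulVec x
                + f x u)) := by
  intro A b P p c f g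
  set s := Real.sqrt 2 with hs_def
  have hs2 : s ^ 2 = 2 := Real.sq_sqrt (by norm_num)
  have hs0 : 0 < s := Real.sqrt_pos.mpr (by norm_num)
  have hslb : 1.414 < s := by nlinarith
  have hsub : s < 1.415 := by nlinarith
  have hR1 : (4 + 2*s)*R < 1 := by
    nlinarith [mul_nonneg (by nlinarith : (0:ℝ) ≤ 3 - 2*s) (sq_nonneg R)]
  have hsR : 0 < 1 - 2*s*R := by nlinarith
  have h2R : 0 < 1 - 2*R := by nlinarith
  have h1' : 4*R^2 < K*(1 - 2*s*R) := by
    rw [div_lt_iff₀ hsR] at h1; linarith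
  have h2' : K*(R+1) < 2*R*(1 - 2*(2+s)*R) := by
    rw [lt_div_iff₀ (by linarith : (0:ℝ) < R + 1)] at h2; linarith
  have hM0 : 0 < M := by
    rw [hM]; exact div_pos (by nlinarith) (by linarith)
  have hM' : M * (4*R) = K*(2+(3+2*s)*R) := by
    rw [hM]; field_simp
  have hkey : R*(4+(5+2*s)*R)^2 < 4*(1-2*R)*((2+(3+2*s)*R)*(1-2*s*R)) := by
    nlinarith only [sq_nonneg R, mul_pos hR hR, mul_pos (mul_pos hR hR) hR, hR1, hs2,
      hR, hs0, hslb, hsub]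
  have hC4 : (4*R)*((M+K/2)*R+K/2) = K*R*(4+(5+2*s)*R) := by linear_combination R * hM'
  have hB4 : (4*R)*(M*K*(1-2*s*R)) = K^2*((2+(3+2*s)*R)*(1-2*s*R)) := by
    linear_combination K*(1-2*s*R)*hM'
  have e1 : (16*R^2) * (((M+K/2)*R+K/2)^2) = (K*R*(4+(5+2*s)*R))^2 := by
    linear_combination ((4*R)*((M+K/2)*R+K/2) + K*R*(4+(5+2*s)*R)) * hC4
  have e3 : (K*R*(4+(5+2*s)*R))^2 < 4*R*(1-2*R)*(K^2*((2+(3+2*s)*R)*(1-2*s*R))) := by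
    nlinarith only [mul_lt_mul_of_pos_left hkey (show (0:ℝ) < R*K^2 by positivity)]
  have e2 : (16*R^2) * ((1-2*R)*(M*K)*(1-2*s*R)) =
      4*R*(1-2*R)*(K^2*((2+(3+2*s)*R)*(1-2*s*R))) := by
    linear_combination 4*R*(1-2*R)*hB4
  have hdisc : ((M+K/2)*R+K/2)^2 < (1-2*R)*(M*K)*(1-2*s*R) := by
    nlinarith only [e1, e2, e3, show (0:ℝ) < 16*R^2 by positivity]
  have hBpos : 0 < M*K*(1-2*s*R)/4 := by positivity
  have hCpos : 0 < (M+K/2)*R+K/2 := by positivity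
  have hden : 0 < 4*((1-2*R) + M*K*(1-2*s*R)/4) := by linarith
  set δ := (4*(1-2*R)*(M*K*(1-2*s*R)/4) - ((M+K/2)*R+K/2)^2) /
      (4*((1-2*R) + M*K*(1-2*s*R)/4)) with hδdef
  have hnum : 0 < 4*(1-2*R)*(M*K*(1-2*s*R)/4) - ((M+K/2)*R+K/2)^2 := by
    nlinarith only [hdisc]
  have hδpos : 0 < δ := div_pos hnum hden
  have hδA : δ < 1 - 2*R := by
    rw [hδdef, div_lt_iff₀ hden]
    nlinarith only [sq_nonneg ((M+K/2)*R+K/2), mul_pos h2R h2R]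
  have hδeq : δ * (4*((1-2*R) + M*K*(1-2*s*R)/4)) =
      4*(1-2*R)*(M*K*(1-2*s*R)/4) - ((M+K/2)*R+K/2)^2 :=
    div_mul_cancel₀ _ hden.ne'
  have hdisc2 : ((M+K/2)*R+K/2)^2 ≤ 4*((1-2*R) - δ)*((M*K*(1-2*s*R)/4) - δ) := by
    nlinarith only [hδeq, sq_nonneg δ]
  refine ⟨δ, hδpos, ?_, ?_, ?_⟩
  · -- (3.3)
    intro x u hx hu
    simp only [A, b, P, p, c, f, g] at hx hu ⊢
    simp [Matrix.mulVec, dotProduct, Fin.sum_univ_two, Matrix.vecHead,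
      Matrix.vecTail] at hx hu ⊢
    obtain ⟨he1, he2⟩ := abs_le.mp hu
    have key := aux33 R K s (x 0) (x 1) u hR hs0 h2'
      (by linarith only [hx]) (by linarith only [he1]) (by linarith only [he2])
    linarith only [key]
  · -- (3.4)
    intro x u hx hu
    simp only [A, b, P, p, c, f, g] at hx hu ⊢
    simp [Matrix.mulVec, dotProduct, Fin.sum_univ_two, Matrix.vecHead,
      Matrix.vecTail] at hx hu ⊢
    obtain ⟨he1, he2⟩ := abs_le.mp hu
    have key := aux34 R K s (x 0) (x 1) u hR hs0 hs2 h1'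
      (by linarith only [hx]) (by linarith only [he1]) (by linarith only [he2])
    rw [abs_lt]
    constructor
    · linarith only [key.1]
    · linarith only [key.2]
  · -- (3.5)
    intro x z u hx hz hu
    subst hu
    simp only [A, b, P, p, c, f, g] at hx ⊢
    simp [Matrix.mulVec, dotProduct, Fin.sum_univ_two, Matrix.vecHead, Matrix.vecTail,
      vecMulVec_apply, Matrix.add_apply, Matrix.smul_apply, Matrix.one_apply,
      smul_eq_mul] at hx ⊢
    have key := aux35 R K M s δ (x 0) (x 1) z hR hK hs0 hs2 hM0 hδA hdisc2
      (by linarith only [hx])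
    linarith only [key]
end
end

section
/- (Discrete attractivity argument from the proof of Lemma 3.4) Let ω, G, r̃ > 0, let 0 = τ₀ < τ₁ < τ₂ < ⋯ be a sequence with 0 < τ_{i+1} − τ_i ≤ r̃ for all i and τ_i → ∞, and let z : [0,∞) → ℝ be a function such that for every index i: (a) |z(t)| ≤ max(|z(τ_i)|, ω⁻¹) for all t ≥ τ_i, and (b) if ω|z(τ_i)| ≥ 1 then |z(τ_{i+1})| ≤ |z(τ_i)| − G(τ_{i+1} − τ_i). Then |z(t)| ≤ ω⁻¹ for all t ≥ max(0, ω|z(0)| − 1)/(ωG) + r̃. -/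
open Filter

/-- **Discrete attractivity argument from the proof of Lemma 3.4.** If along the sampling
times `τᵢ` the quantity `|z|` is non-expanding above the level `ω⁻¹` and strictly decreases
at rate `G` while `ω|z(τᵢ)| ≥ 1`, then `|z(t)| ≤ ω⁻¹` for all
`t ≥ max(0, ω|z(0)| - 1)/(ωG) + r̃`. -/
theorem discrete_attractivity (ω G rt : ℝ) (hω : 0 < ω) (hG : 0 < G) (hrt : 0 < rt)
    (τ : ℕ → ℝ) (hτ0 : τ 0 = 0)
    (hpos : ∀ i, 0 < τ (i+1) - τ i) (hmasp : ∀ i, τ (i+1) - τ i ≤ rt)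
    (htend : Tendsto τ atTop atTop)
    (z : ℝ → ℝ)
    (ha : ∀ i : ℕ, ∀ t : ℝ, τ i ≤ t → |z t| ≤ max (|z (τ i)|) ω⁻¹)
    (hb : ∀ i : ℕ, 1 ≤ ω * |z (τ i)| → |z (τ (i+1))| ≤ |z (τ i)| - G * (τ (i+1) - τ i)) :
    ∀ t : ℝ, max 0 (ω * |z 0| - 1) / (ω * G) + rt ≤ t → |z t| ≤ ω⁻¹ := by
  classical
  intro t ht
  set T := max 0 (ω * |z 0| - 1) / (ω * G) + rt with hT
  clear_value T
  have hωG : 0 < ω * G := mul_pos hω hG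
  have hTnn : 0 < T := by
    have : 0 ≤ max 0 (ω * |z 0| - 1) / (ω * G) :=
      div_nonneg (le_max_left _ _) hωG.le
    linarith
  -- telescoping
  have key : ∀ n : ℕ, (∀ j < n, 1 ≤ ω * |z (τ j)|) →
      |z (τ n)| ≤ |z (τ 0)| - G * (τ n - τ 0) := by
    intro n
    induction n with
    | zero => intro _; simp
    | succ n ih =>
      intro h
      have h1 := ih (fun j hj => h j (Nat.lt_succ_of_lt hj))
      have h2 := hb n (h n (Nat.lt_succ_self n))
      nlinarith [hpos n]
  have hex : ∃ i, ω * |z (τ i)| < 1 := by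
    by_contra hc
    push_neg at hc
    obtain ⟨n, hn⟩ := (htend.eventually_ge_atTop ((|z (τ 0)| + 1) / G)).exists
    have h1 := key n (fun j _ => hc j)
    have h2 : (|z (τ 0)| + 1) / G * G ≤ τ n * G := by
      exact mul_le_mul_of_nonneg_right hn hG.le
    rw [div_mul_cancel₀ _ hG.ne'] at h2
    rw [hτ0] at h1 h2
    nlinarith [abs_nonneg (z (τ n))]
  obtain ⟨i, hzi, hmin⟩ : ∃ i, ω * |z (τ i)| < 1 ∧ ∀ j < i, 1 ≤ ω * |z (τ j)| :=
    ⟨Nat.find hex, Nat.find_spec hex, fun j hj => le_of_not_gt (Nat.find_min hex hj)⟩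
  have hτiT : τ i ≤ T := by
    cases' i with m
    · rw [hτ0]; linarith
    · have hchain := key m (fun j hj => hmin j (Nat.lt_succ_of_lt hj))
      have hm : 1 ≤ ω * |z (τ m)| := hmin m (Nat.lt_succ_self m)
      rw [hτ0] at hchain
      -- ω⁻¹ ≤ |z (τ m)| ≤ |z 0| - G * τ m
      have hinv : ω⁻¹ ≤ |z (τ m)| := by
        rw [inv_le_iff_one_le_mul₀ hω]
        linarith [hm]
      have hτm : τ m ≤ (ω * |z 0| - 1) / (ω * G) := by
        rw [le_div_iff₀ hωG]
        nlinarith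
      have hle : (ω * |z 0| - 1) / (ω * G) ≤ max 0 (ω * |z 0| - 1) / (ω * G) := by
        gcongr
        exact le_max_right _ _
      have hstep := hmasp m
      have : τ (m + 1) ≤ τ m + rt := by linarith
      linarith
  -- conclude
  have hτit : τ i ≤ t := le_trans hτiT ht
  have hzlt : |z (τ i)| ≤ ω⁻¹ := by
    rw [← one_div, le_div_iff₀ hω]
    linarith [hzi]
  calc |z t| ≤ max (|z (τ i)|) ω⁻¹ := ha i t hτit
    _ ≤ ω⁻¹ := max_le hzlt le_rfl
end

section
/- (Example 4.2, explicit verification of inequality (4.18)) Let k₁, k₂ > 0, let A = [[0,0],[1,0]] ∈ ℝ^{2×2}, b = (1,0)', and define f(d,x) = (k₁d₁x₁, k₂d₂x₂)' for d = (d₁,d₂) ∈ [−1,1]² and x = (x₁,x₂)' ∈ ℝ². Set S = 1/2 + k₁ + (1/2)(1+k₂)²(k₂+k₁)², P = [[1, 1+k₂],[1+k₂, (1+k₂)²+1]], p = −(1+S+k₂, 1+S(1+k₂))', and q = (√((1+k₂)²+4) − 1 − k₂) / (2 + 2k₂ + 2√((1+k₂)²+4)). Then P is symmetric positive definite, q >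 0, and x'P(A + bp')x + x'Pf(d,x) ≤ −q|x|² for all d ∈ [−1,1]² and all x ∈ ℝ². -/
/-!
With `c = 1 + k₂` we have `P = Tᵀ T` for the shear `T = [[1, c], [0, 1]]`, so in the coordinates
`u = x₁ + c x₂`, `v = x₂` the form `x'Px` is `u² + v²`. In these coordinates the nominal closed loop
contributes `-S u² - c v²`, and the disturbance at most `(S - 1/2) u² + (1/2 + k₂) v²` (the cross
term by AM–GM), so the left side is at most `-x'Px / 2`. Finally `q` is half the smallest eigenvalue
`(r - c) / (r + c) = ((r - c) / 2)²` of `P`, where `r = √(c² + 4)`.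
-/

open Matrix

theorem disturbance_term_le {k1 k2 d0 d1 : ℝ} (hk1 : 0 ≤ k1) (hk2 : 0 ≤ k2)
    (hd0 : d0 ∈ Set.Icc (-1 : ℝ) 1) (hd1 : d1 ∈ Set.Icc (-1 : ℝ) 1) (c u v : ℝ) :
    k1 * d0 * (u - c * v) * u + k2 * d1 * v * (c * u + v)
      ≤ (k1 + c ^ 2 * (k1 + k2) ^ 2 / 2) * u ^ 2 + (1 / 2 + k2) * v ^ 2 := by
  obtain ⟨hd0l, hd0u⟩ := hd0
  obtain ⟨hd1l, hd1u⟩ := hd1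
  have hdiag0 : k1 * d0 * u ^ 2 ≤ k1 * u ^ 2 :=
    mul_le_mul_of_nonneg_right (mul_le_of_le_one_right hk1 hd0u) (sq_nonneg u)
  have hdiag1 : k2 * d1 * v ^ 2 ≤ k2 * v ^ 2 :=
    mul_le_mul_of_nonneg_right (mul_le_of_le_one_right hk2 hd1u) (sq_nonneg v)
  have hgain : (k2 * d1 - k1 * d0) ^ 2 ≤ (k1 + k2) ^ 2 :=
    sq_le_sq' (by nlinarith) (by nlinarith)
  have hcross : c * (k2 * d1 - k1 * d0) * u * v
      ≤ c ^ 2 * (k1 + k2) ^ 2 / 2 * u ^ 2 + v ^ 2 / 2 := by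
    nlinarith [two_mul_le_add_sq (c * (k2 * d1 - k1 * d0) * u) v,
      mul_le_mul_of_nonneg_left hgain (sq_nonneg (c * u))]
  linear_combination hdiag0 + hdiag1 + hcross

theorem sqrt_sub_div_sqrt_add_mul_le {c : ℝ} (hc : 0 ≤ c) (x y : ℝ) :
    (√(c ^ 2 + 4) - c) / (√(c ^ 2 + 4) + c) * (x ^ 2 + y ^ 2) ≤ (x + c * y) ^ 2 + y ^ 2 := by
  set r := √(c ^ 2 + 4)
  have hr2 : r ^ 2 = c ^ 2 + 4 := Real.sq_sqrt (by positivity)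
  have hr : 0 < r + c := by positivity
  rw [div_mul_eq_mul_div, div_le_iff₀ hr]
  -- `(r + c) P - (r - c) I` is the rank-one form below, since `r ^ 2 - c ^ 2 = 4`
  have hid : (r + c) * ((x + c * y) ^ 2 + y ^ 2) - (r - c) * (x ^ 2 + y ^ 2)
      = c / 2 * (2 * x + (r + c) * y) ^ 2 := by
    linear_combination (-(c / 2) * y ^ 2) * hr2
  nlinarith [mul_nonneg hc (sq_nonneg (2 * x + (r + c) * y))]

/-- **Example 4.2, explicit verification of inequality (4.18)** for the uncertain planar
system `ẋ₁ = k₁d₁x₁ + u`, `ẋ₂ = k₂d₂x₂ + x₁` with `d₁, d₂ ∈ [-1,1]`. -/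
theorem example_4_2_ineq_418 (k1 k2 : ℝ) (hk1 : 0 < k1) (hk2 : 0 < k2) :
    let A : Matrix (Fin 2) (Fin 2) ℝ := !![0, 0; 1, 0]
    let b : Fin 2 → ℝ := ![1, 0]
    let S : ℝ := 1/2 + k1 + 1/2 * (1 + k2) ^ 2 * (k2 + k1) ^ 2
    let P : Matrix (Fin 2) (Fin 2) ℝ := !![1, 1 + k2; 1 + k2, (1 + k2) ^ 2 + 1]
    let p : Fin 2 → ℝ := ![-(1 + S + k2), -(1 + S * (1 + k2))]
    let q : ℝ := (Real.sqrt ((1 + k2) ^ 2 + 4) - 1 - k2)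
        / (2 + 2 * k2 + 2 * Real.sqrt ((1 + k2) ^ 2 + 4))
    P.IsSymm ∧ P.PosDef ∧ 0 < q ∧
    ∀ d : Fin 2 → ℝ, d 0 ∈ Set.Icc (-1:ℝ) 1 → d 1 ∈ Set.Icc (-1:ℝ) 1 →
    ∀ x : Fin 2 → ℝ,
      x ⬝ᵥ P.mulVec ((A + vecMulVec b p).mulVec x)
          + x ⬝ᵥ P.mulVec ![k1 * d 0 * x 0, k2 * d 1 * x 1]
        ≤ -q * ((x 0) ^ 2 + (x 1) ^ 2) := by
  intro A b S P p q
  set T : Matrix (Fin 2) (Fin 2) ℝ := !![1, 1 + k2; 0, 1]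
  have hPT : P = Tᵀ * T := by
    ext i j
    fin_cases i <;> fin_cases j <;>
      simp only [P, T, of_apply, cons_val', cons_val_zero, cons_val_one, cons_val_fin_one,
        mul_apply, transpose_apply, Fin.sum_univ_two, Fin.isValue, Fin.zero_eta, Fin.mk_one,
        one_mul, mul_one, mul_zero, add_zero]
    ring
  have hT : Function.Injective T.mulVec :=
    mulVec_injective_iff_isUnit.2 ((isUnit_iff_isUnit_det T).2 (by simp [T, det_fin_two_of]))
  set r := √((1 + k2) ^ 2 + 4)
  have hr : 1 + k2 < r := (Real.lt_sqrt (by positivity)).2 (by linarith)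
  refine ⟨hPT ▸ isSymm_transpose_mul_self T, ?_, div_pos (by linarith) (by positivity), ?_⟩
  · rw [hPT, ← conjTranspose_eq_transpose_of_trivial]
    exact .conjTranspose_mul_self T hT
  intro d hd0 hd1 x
  have hnominal : x ⬝ᵥ P *ᵥ ((A + vecMulVec b p) *ᵥ x)
      = -S * (x 0 + (1 + k2) * x 1) ^ 2 - (1 + k2) * x 1 ^ 2 := by
    simp only [A, b, P, p, dotProduct, mulVec, vecMulVec, Matrix.add_apply, of_apply, cons_val',
      cons_val_zero, cons_val_one, cons_val_fin_one, Fin.sum_univ_two, Fin.isValue]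
    ring
  have hdisturbance : x ⬝ᵥ P *ᵥ ![k1 * d 0 * x 0, k2 * d 1 * x 1]
      = k1 * d 0 * x 0 * (x 0 + (1 + k2) * x 1)
        + k2 * d 1 * x 1 * ((1 + k2) * (x 0 + (1 + k2) * x 1) + x 1) := by
    simp only [P, dotProduct, mulVec, of_apply, cons_val', cons_val_zero, cons_val_one,
      cons_val_fin_one, Fin.sum_univ_two, Fin.isValue]
    ring
  have hq : q = (r - (1 + k2)) / (r + (1 + k2)) / 2 := by
    rw [div_div]
    ring
  have hD := disturbance_term_le hk1.le hk2.le hd0 hd1 (1 + k2) (x 0 + (1 + k2) * x 1) (x 1)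
  have hE := sqrt_sub_div_sqrt_add_mul_le (by positivity : 0 ≤ 1 + k2) (x 0) (x 1)
  rw [hnominal, hdisturbance, hq]
  simp only [S]
  linear_combination hD + hE / 2
end
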